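/- For every n ≥ 1, P(ξ_{α_n} = 1 and α_n < ∞) = P(ξ_{α_n} = −1 and α_n < ∞) = (1/2)·P(α_n < ∞), and likewise P(ξ_{β_n} = 1 and β_n < ∞) = P(ξ_{β_n} = −1 and β_n < ∞) = (1/2)·P(β_n < ∞). (Here, on {α_n = i < ∞}, ξ_{α_n} means ξ_i.) -/

import Mathlib

open MeasureTheory ProbabilityTheory Filter Set

noncomputable section

variable {Ω : Type*}

/-- `Q n = 1` if the `n`-th moves agree, `0` if they are opposite. -/
def Qproc (ξ η : ℕ → Ω → ℝ) (n : ℕ) (ω : Ω) : ℕ :=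
  if ξ n ω = η n ω then 1 else 0

/-- `T n = ∑_{k=1}^n Q k`, the number of common movements up to step `n`. -/
def Tproc (ξ η : ℕ → Ω → ℝ) (n : ℕ) (ω : Ω) : ℕ :=
  ∑ k ∈ Finset.Icc 1 n, Qproc ξ η k ω

/-- `S n = n - T n`, the number of counter movements up to step `n`. -/
def Sproc (ξ η : ℕ → Ω → ℝ) (n : ℕ) (ω : Ω) : ℕ :=
  n - Tproc ξ η n ω

/-- `α n = inf {k ≥ 1 : T k = n}`, with `inf ∅ = ⊤`, valued in `ℕ∞`. -/
def alphaProc (ξ η : ℕ → Ω → ℝ) (n : ℕ) (ω : Ω) : ℕ∞ :=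
  ⨅ (k : ℕ) (_ : 1 ≤ k ∧ Tproc ξ η k ω = n), (k : ℕ∞)

/-- `β n = inf {k ≥ 1 : S k = n}`, with `inf ∅ = ⊤`, valued in `ℕ∞`. -/
def betaProc (ξ η : ℕ → Ω → ℝ) (n : ℕ) (ω : Ω) : ℕ∞ :=
  ⨅ (k : ℕ) (_ : 1 ≤ k ∧ Sproc ξ η k ω = n), (k : ℕ∞)

/-- `ξ̃_{α n}`: equal to `ξ_i` on `{α n = i}` (`i < ∞`) and to `ζ n` on `{α n = ∞}`. -/
def xiAlpha (ξ η ζ : ℕ → Ω → ℝ) (n : ℕ) (ω : Ω) : ℝ :=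
  if alphaProc ξ η n ω = ⊤ then ζ n ω else ξ (alphaProc ξ η n ω).toNat ω

/-- `ξ̃_{β m}`: equal to `ξ_i` on `{β m = i}` (`i < ∞`) and to `ψ m` on `{β m = ∞}`. -/
def xiBeta (ξ η ψ : ℕ → Ω → ℝ) (m : ℕ) (ω : Ω) : ℝ :=
  if betaProc ξ η m ω = ⊤ then ψ m ω else ξ (betaProc ξ η m ω).toNat ω

/-- The common-movement walk `X n = ∑_{i=1}^n ξ̃_{α i}`. -/
def Xproc (ξ η ζ : ℕ → Ω → ℝ) (n : ℕ) (ω : Ω) : ℝ :=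
  ∑ i ∈ Finset.Icc 1 n, xiAlpha ξ η ζ i ω

/-- The counter-movement walk `Y n = ∑_{i=1}^n ξ̃_{β i}`. -/
def Yproc (ξ η ψ : ℕ → Ω → ℝ) (n : ℕ) (ω : Ω) : ℝ :=
  ∑ i ∈ Finset.Icc 1 n, xiBeta ξ η ψ i ω

/-!
Write `B = {T_k = n - 1} ∈ F_k`, so that `{α_n = k + 1} = B ∩ {ξ_{k+1} = η_{k+1}}`. Conditionally
on `F_k`, `ξ_{k+1}` and `η_{k+1}` are fair signs, hence
`P(B, ξ_{k+1} = 1) = P(B)/2 = P(B, η_{k+1} = -1)`; removing the common part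
`B ∩ {ξ_{k+1} = 1, η_{k+1} = -1}` from both sides leaves `P(B, ξ = η = 1) = P(B, ξ = η = -1)`.
Summing over `k` shows that `ξ_{α_n}` is a fair sign on `{α_n < ∞}`. For `β_n` the same argument
runs with `S` in place of `T` and `-η` in place of `η`.
-/

lemma setOf_eq_neg_one_eq_compl {f : Ω → ℝ} (hf : ∀ ω, f ω = 1 ∨ f ω = -1) :
    {ω | f ω = -1} = {ω | f ω = 1}ᶜ := by
  ext ω
  rcases hf ω with h | h <;> simp [h] <;> norm_num

section SignedEvents

variable {m : MeasurableSpace Ω} [mΩ : MeasurableSpace Ω] {P : Measure Ω}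
  [IsFiniteMeasure P]

lemma measure_inter_eq_half_of_condExp_indicator (hm : m ≤ mΩ)
    {A B : Set Ω} (hA : MeasurableSet[mΩ] A) (hB : MeasurableSet[m] B)
    (h : P[A.indicator (fun _ => (1 : ℝ)) | m] =ᵐ[P] fun _ => 1 / 2) :
    P (B ∩ A) = 2⁻¹ * P B := by
  have hreal : P.real (B ∩ A) = 2⁻¹ * P.real B := by
    have hint := setIntegral_condExp hm ((integrable_const (μ := P) (1 : ℝ)).indicator hA) hB
    rw [setIntegral_congr_ae (hm B hB) (h.mono fun ω hω _ => hω), setIntegral_indicator hA,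
      setIntegral_const, setIntegral_const] at hint
    simpa [mul_comm] using hint.symm
  rw [measureReal_def, measureReal_def, ← ENNReal.toReal_ofNat, ← ENNReal.toReal_inv,
    ← ENNReal.toReal_mul] at hreal
  exact (ENNReal.toReal_eq_toReal_iff' (measure_ne_top _ _) (by finiteness)).mp hreal

lemma measure_inter_inter_eq_of_measure_inter_eq_compl {A B C : Set Ω}
    (hA : MeasurableSet A) (hC : MeasurableSet C) (h : P (B ∩ A) = P (B ∩ Cᶜ)) :
    P (B ∩ A ∩ C) = P (B ∩ Aᶜ ∩ Cᶜ) := by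
  have hBA := measure_inter_add_sdiff (μ := P) (B ∩ A) hC
  have hBC := measure_inter_add_sdiff (μ := P) (B ∩ Cᶜ) hA
  rw [← h, sdiff_eq, inter_right_comm B Cᶜ A, inter_right_comm B Cᶜ Aᶜ] at hBC
  rw [sdiff_eq] at hBA
  exact (ENNReal.add_left_inj (measure_ne_top P _)).mp (hBA.trans (hBC.symm.trans (add_comm _ _)))

variable {B : Set Ω} {f g : Ω → ℝ}

lemma measure_agree_inter_eq_one_eq_neg_one (hm : m ≤ mΩ) (hB : MeasurableSet[m] B)
    (hf : Measurable[mΩ] f) (hg : Measurable[mΩ] g)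
    (hfv : ∀ ω, f ω = 1 ∨ f ω = -1) (hgv : ∀ ω, g ω = 1 ∨ g ω = -1)
    (hf1 : P[{ω | f ω = 1}.indicator (fun _ => (1 : ℝ)) | m] =ᵐ[P] fun _ => 1 / 2)
    (hg1 : P[{ω | g ω = -1}.indicator (fun _ => (1 : ℝ)) | m] =ᵐ[P] fun _ => 1 / 2) :
    P (B ∩ {ω | f ω = g ω} ∩ {ω | f ω = 1}) = P (B ∩ {ω | f ω = g ω} ∩ {ω | f ω = -1}) := by
  have hA : MeasurableSet {ω | f ω = 1} := hf (measurableSet_singleton 1)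
  have hC : MeasurableSet {ω | g ω = 1} := hg (measurableSet_singleton 1)
  have hC' : MeasurableSet {ω | g ω = -1} := hg (measurableSet_singleton (-1))
  have hhalf : P (B ∩ {ω | f ω = 1}) = P (B ∩ {ω | g ω = 1}ᶜ) := by
    rw [← setOf_eq_neg_one_eq_compl hgv,
      measure_inter_eq_half_of_condExp_indicator hm hA hB hf1,
      measure_inter_eq_half_of_condExp_indicator hm hC' hB hg1]
  convert measure_inter_inter_eq_of_measure_inter_eq_compl hA hC hhalf using 2 <;>
    ext ω <;> rcases hfv ω with h | h <;> rcases hgv ω with h' | h' <;> simp [h, h'] <;> norm_num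

lemma measure_disagree_inter_eq_one_eq_neg_one (hm : m ≤ mΩ) (hB : MeasurableSet[m] B)
    (hf : Measurable[mΩ] f) (hg : Measurable[mΩ] g)
    (hfv : ∀ ω, f ω = 1 ∨ f ω = -1) (hgv : ∀ ω, g ω = 1 ∨ g ω = -1)
    (hf1 : P[{ω | f ω = 1}.indicator (fun _ => (1 : ℝ)) | m] =ᵐ[P] fun _ => 1 / 2)
    (hg1 : P[{ω | g ω = 1}.indicator (fun _ => (1 : ℝ)) | m] =ᵐ[P] fun _ => 1 / 2) :
    P (B ∩ {ω | f ω ≠ g ω} ∩ {ω | f ω = 1}) = P (B ∩ {ω | f ω ≠ g ω} ∩ {ω | f ω = -1}) := by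
  have hne : {ω | f ω ≠ g ω} = {ω | f ω = (-g) ω} := by
    ext ω
    rcases hfv ω with h | h <;> rcases hgv ω with h' | h' <;> simp [h, h'] <;> norm_num
  rw [hne]
  refine measure_agree_inter_eq_one_eq_neg_one hm hB hf hg.neg hfv
    (fun ω => (hgv ω).symm.imp (by simp [·]) (by simp [·])) hf1 ?_
  simpa using hg1

end SignedEvents

section StoppedSign

variable {τ : Ω → ℕ∞} {ξ : ℕ → Ω → ℝ}

lemma setOf_stopped_eq_iUnion (hτ0 : ∀ ω, τ ω ≠ 0) (c : ℝ) :
    {ω | τ ω ≠ ⊤ ∧ ξ (τ ω).toNat ω = c}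
      = ⋃ k : ℕ, {ω | τ ω = (k + 1 : ℕ)} ∩ {ω | ξ (k + 1) ω = c} := by
  ext ω
  simp only [mem_ofPred_eq, mem_iUnion, mem_inter_iff]
  constructor
  · rintro ⟨hne, hc⟩
    obtain ⟨_ | k, hk⟩ := ENat.ne_top_iff_exists.mp hne
    · exact absurd hk.symm (by simpa using hτ0 ω)
    · exact ⟨k, hk.symm, by rwa [← hk, ENat.toNat_natCast] at hc⟩
  · rintro ⟨k, hk, hc⟩
    rw [hk, ENat.toNat_natCast]
    exact ⟨ENat.natCast_ne_top _, hc⟩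

variable [MeasurableSpace Ω] {P : Measure Ω}

lemma measure_stopped_eq_tsum (hτ0 : ∀ ω, τ ω ≠ 0)
    (hτ : ∀ k : ℕ, MeasurableSet {ω | τ ω = (k + 1 : ℕ)}) (hξ : ∀ k, Measurable (ξ (k + 1)))
    (c : ℝ) :
    P {ω | τ ω ≠ ⊤ ∧ ξ (τ ω).toNat ω = c}
      = ∑' k : ℕ, P ({ω | τ ω = (k + 1 : ℕ)} ∩ {ω | ξ (k + 1) ω = c}) := by
  rw [setOf_stopped_eq_iUnion hτ0]
  refine measure_iUnion (fun i j hij => disjoint_left.mpr fun ω hi hj => hij ?_)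
    (fun k => (hτ k).inter (hξ k (measurableSet_singleton c)))
  simpa using hi.1.symm.trans hj.1

lemma measure_stopped_sign_eq_half [IsFiniteMeasure P] (hτ0 : ∀ ω, τ ω ≠ 0)
    (hτ : ∀ k : ℕ, MeasurableSet {ω | τ ω = (k + 1 : ℕ)}) (hξ : ∀ k, Measurable (ξ (k + 1)))
    (hξv : ∀ k ω, ξ k ω = 1 ∨ ξ k ω = -1)
    (hsym : ∀ k : ℕ, P ({ω | τ ω = (k + 1 : ℕ)} ∩ {ω | ξ (k + 1) ω = 1})
      = P ({ω | τ ω = (k + 1 : ℕ)} ∩ {ω | ξ (k + 1) ω = -1})) :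
    P {ω | τ ω ≠ ⊤ ∧ ξ (τ ω).toNat ω = 1} = 2⁻¹ * P {ω | τ ω ≠ ⊤} ∧
    P {ω | τ ω ≠ ⊤ ∧ ξ (τ ω).toNat ω = -1} = 2⁻¹ * P {ω | τ ω ≠ ⊤} := by
  have heq : P {ω | τ ω ≠ ⊤ ∧ ξ (τ ω).toNat ω = 1} = P {ω | τ ω ≠ ⊤ ∧ ξ (τ ω).toNat ω = -1} := by
    simp only [measure_stopped_eq_tsum hτ0 hτ hξ, hsym]
  have hsplit : {ω | τ ω ≠ ⊤}
      = {ω | τ ω ≠ ⊤ ∧ ξ (τ ω).toNat ω = 1} ∪ {ω | τ ω ≠ ⊤ ∧ ξ (τ ω).toNat ω = -1} := by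
    ext ω
    rcases hξv (τ ω).toNat ω with h | h <;> simp [h] <;> norm_num
  have hdisj : Disjoint {ω | τ ω ≠ ⊤ ∧ ξ (τ ω).toNat ω = 1}
      {ω | τ ω ≠ ⊤ ∧ ξ (τ ω).toNat ω = -1} :=
    disjoint_left.mpr fun ω h1 h2 => by norm_num [h1.2] at h2
  have hmeas : MeasurableSet {ω | τ ω ≠ ⊤ ∧ ξ (τ ω).toNat ω = -1} := by
    rw [setOf_stopped_eq_iUnion hτ0]
    exact .iUnion fun k => (hτ k).inter (hξ k (measurableSet_singleton _))
  have htot : P {ω | τ ω ≠ ⊤} = 2 * P {ω | τ ω ≠ ⊤ ∧ ξ (τ ω).toNat ω = 1} := by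
    rw [hsplit, measure_union hdisj hmeas, ← heq, two_mul]
  refine ⟨?_, heq ▸ ?_⟩ <;>
    rw [htot, ← mul_assoc, ENNReal.inv_mul_cancel two_ne_zero ENNReal.ofNat_ne_top, one_mul]

end StoppedSign

lemma iInf_natCast_eq_natCast_iff {p : ℕ → Prop} {m : ℕ} :
    (⨅ (k : ℕ) (_ : p k), (k : ℕ∞)) = m ↔ p m ∧ ∀ j, p j → m ≤ j := by
  have hleast : ∀ {m}, p m → (∀ j, p j → m ≤ j) → (⨅ (k : ℕ) (_ : p k), (k : ℕ∞)) = m :=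
    fun h1 h2 => le_antisymm (iInf₂_le _ h1) (le_iInf₂ fun j hj => by exact_mod_cast h2 j hj)
  refine ⟨fun h => ?_, fun h => hleast h.1 h.2⟩
  classical
  have hex : ∃ k, p k := by
    by_contra! hne
    simp [hne] at h
  rw [hleast (Nat.find_spec hex) fun j => Nat.find_min' hex, Nat.cast_inj] at h
  exact h ▸ ⟨Nat.find_spec hex, fun j => Nat.find_min' hex⟩

lemma iInf_first_passage_eq_succ_iff {c : ℕ → ℕ} (h0 : c 0 = 0)
    (hstep : ∀ k, c (k + 1) = c k ∨ c (k + 1) = c k + 1) {n : ℕ} (hn : 1 ≤ n) {k : ℕ} :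
    (⨅ (j : ℕ) (_ : 1 ≤ j ∧ c j = n), (j : ℕ∞)) = (k + 1 : ℕ) ↔
      c k = n - 1 ∧ c (k + 1) = c k + 1 := by
  have hmono : Monotone c :=
    monotone_nat_of_le_succ fun k => by rcases hstep k with h | h <;> omega
  rw [iInf_natCast_eq_natCast_iff]
  constructor
  · rintro ⟨⟨-, hk1⟩, hmin⟩
    have hk : c k ≠ n := fun h => by
      rcases k.eq_zero_or_pos with rfl | hpos
      · omega
      · have := hmin k ⟨hpos, h⟩
        omega
    rcases hstep k with h | h <;> omega
  · rintro ⟨hk, hk1⟩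
    refine ⟨⟨k.succ_pos, by omega⟩, fun j hj => ?_⟩
    by_contra! hjk
    have := hmono (Nat.lt_succ_iff.mp hjk)
    omega

section Moves

variable {ξ η : ℕ → Ω → ℝ}

lemma Tproc_succ (k : ℕ) (ω : Ω) :
    Tproc ξ η (k + 1) ω = Tproc ξ η k ω + if ξ (k + 1) ω = η (k + 1) ω then 1 else 0 := by
  simp only [Tproc, Finset.sum_Icc_succ_top (Nat.le_add_left 1 k), Qproc]

lemma Tproc_le (k : ℕ) (ω : Ω) : Tproc ξ η k ω ≤ k := by
  induction k with
  | zero => simp [Tproc]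
  | succ k ih => rw [Tproc_succ]; split_ifs <;> omega

lemma Sproc_succ (k : ℕ) (ω : Ω) :
    Sproc ξ η (k + 1) ω = Sproc ξ η k ω + if ξ (k + 1) ω = η (k + 1) ω then 0 else 1 := by
  have := Tproc_le (ξ := ξ) (η := η) k ω
  simp only [Sproc, Tproc_succ]
  split_ifs <;> omega

lemma alphaProc_ne_zero (n : ℕ) (ω : Ω) : alphaProc ξ η n ω ≠ 0 :=
  (zero_lt_one.trans_le (le_iInf₂ fun k hk => by exact_mod_cast hk.1)).ne'

lemma betaProc_ne_zero (n : ℕ) (ω : Ω) : betaProc ξ η n ω ≠ 0 :=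
  (zero_lt_one.trans_le (le_iInf₂ fun k hk => by exact_mod_cast hk.1)).ne'

lemma setOf_alphaProc_eq_succ {n : ℕ} (hn : 1 ≤ n) (k : ℕ) :
    {ω | alphaProc ξ η n ω = (k + 1 : ℕ)}
      = {ω | Tproc ξ η k ω = n - 1} ∩ {ω | ξ (k + 1) ω = η (k + 1) ω} := by
  ext ω
  rw [mem_ofPred_eq, alphaProc, iInf_first_passage_eq_succ_iff (by simp [Tproc])
    (fun j => by rw [Tproc_succ]; split_ifs <;> simp) hn, Tproc_succ]
  split_ifs <;> simp [*]

lemma setOf_betaProc_eq_succ {n : ℕ} (hn : 1 ≤ n) (k : ℕ) :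
    {ω | betaProc ξ η n ω = (k + 1 : ℕ)}
      = {ω | Sproc ξ η k ω = n - 1} ∩ {ω | ξ (k + 1) ω ≠ η (k + 1) ω} := by
  ext ω
  rw [mem_ofPred_eq, betaProc, iInf_first_passage_eq_succ_iff (by simp [Sproc, Tproc])
    (fun j => by rw [Sproc_succ]; split_ifs <;> simp) hn, Sproc_succ]
  split_ifs <;> simp [*]

variable [mΩ : MeasurableSpace Ω] {F : Filtration ℕ mΩ}

lemma measurable_Tproc (hξm : ∀ n, 1 ≤ n → Measurable[F n] (ξ n))
    (hηm : ∀ n, 1 ≤ n → Measurable[F n] (η n)) (k : ℕ) :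
    Measurable[F k] (Tproc ξ η k) := by
  refine Finset.measurable_sum _ fun j hj => ?_
  obtain ⟨hj1, hjk⟩ := Finset.mem_Icc.mp hj
  exact (Measurable.ite (measurableSet_eq_fun (hξm j hj1) (hηm j hj1)) measurable_const
    measurable_const).mono (F.mono hjk) le_rfl

lemma measurable_Sproc (hξm : ∀ n, 1 ≤ n → Measurable[F n] (ξ n))
    (hηm : ∀ n, 1 ≤ n → Measurable[F n] (η n)) (k : ℕ) :
    Measurable[F k] (Sproc ξ η k) :=
  measurable_from_nat.comp (measurable_Tproc hξm hηm k)

end Moves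

theorem stmt_4_general
    {Ω : Type*} [mΩ : MeasurableSpace Ω] (P : Measure Ω) [IsProbabilityMeasure P]
    (F : MeasureTheory.Filtration ℕ mΩ)
    (ξ η : ℕ → Ω → ℝ)
    (hξm : ∀ n, 1 ≤ n → Measurable[F n] (ξ n))
    (hηm : ∀ n, 1 ≤ n → Measurable[F n] (η n))
    (hξv : ∀ n ω, ξ n ω = 1 ∨ ξ n ω = -1)
    (hηv : ∀ n ω, η n ω = 1 ∨ η n ω = -1)
    (hhalf : ∀ n, 1 ≤ n →
      (P[({ω | ξ n ω = 1}).indicator (fun _ => (1 : ℝ)) | F (n - 1)] =ᵐ[P] fun _ => 1 / 2) ∧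
      (P[({ω | ξ n ω = -1}).indicator (fun _ => (1 : ℝ)) | F (n - 1)] =ᵐ[P] fun _ => 1 / 2) ∧
      (P[({ω | η n ω = 1}).indicator (fun _ => (1 : ℝ)) | F (n - 1)] =ᵐ[P] fun _ => 1 / 2) ∧
      (P[({ω | η n ω = -1}).indicator (fun _ => (1 : ℝ)) | F (n - 1)] =ᵐ[P] fun _ => 1 / 2)) :
    ∀ n : ℕ, 1 ≤ n →
      (P {ω | alphaProc ξ η n ω ≠ ⊤ ∧ ξ (alphaProc ξ η n ω).toNat ω = 1}
        = 2⁻¹ * P {ω | alphaProc ξ η n ω ≠ ⊤}) ∧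
      (P {ω | alphaProc ξ η n ω ≠ ⊤ ∧ ξ (alphaProc ξ η n ω).toNat ω = -1}
        = 2⁻¹ * P {ω | alphaProc ξ η n ω ≠ ⊤}) ∧
      (P {ω | betaProc ξ η n ω ≠ ⊤ ∧ ξ (betaProc ξ η n ω).toNat ω = 1}
        = 2⁻¹ * P {ω | betaProc ξ η n ω ≠ ⊤}) ∧
      (P {ω | betaProc ξ η n ω ≠ ⊤ ∧ ξ (betaProc ξ η n ω).toNat ω = -1}
        = 2⁻¹ * P {ω | betaProc ξ η n ω ≠ ⊤}) := by
  intro n hn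
  have hhalf' (k : ℕ) := hhalf (k + 1) k.succ_pos
  have hξ (k : ℕ) : Measurable (ξ (k + 1)) := (hξm _ k.succ_pos).mono (F.le _) le_rfl
  have hη (k : ℕ) : Measurable (η (k + 1)) := (hηm _ k.succ_pos).mono (F.le _) le_rfl
  have hT (k : ℕ) : MeasurableSet[F k] {ω | Tproc ξ η k ω = n - 1} :=
    measurable_Tproc hξm hηm k (measurableSet_singleton _)
  have hS (k : ℕ) : MeasurableSet[F k] {ω | Sproc ξ η k ω = n - 1} :=
    measurable_Sproc hξm hηm k (measurableSet_singleton _)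
  obtain ⟨hα₁, hα₂⟩ := measure_stopped_sign_eq_half (alphaProc_ne_zero n)
    (fun k => by
      rw [setOf_alphaProc_eq_succ hn]
      exact (F.le k _ (hT k)).inter (measurableSet_eq_fun (hξ k) (hη k)))
    hξ hξv (fun k => by
      rw [setOf_alphaProc_eq_succ hn]
      exact measure_agree_inter_eq_one_eq_neg_one (F.le k) (hT k) (hξ k) (hη k) (hξv _) (hηv _)
        (hhalf' k).1 (hhalf' k).2.2.2)
  obtain ⟨hβ₁, hβ₂⟩ := measure_stopped_sign_eq_half (betaProc_ne_zero n)
    (fun k => by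
      rw [setOf_betaProc_eq_succ hn]
      exact (F.le k _ (hS k)).inter (measurableSet_eq_fun (hξ k) (hη k)).compl)
    hξ hξv (fun k => by
      rw [setOf_betaProc_eq_succ hn]
      exact measure_disagree_inter_eq_one_eq_neg_one (F.le k) (hS k) (hξ k) (hη k) (hξv _)
        (hηv _) (hhalf' k).1 (hhalf' k).2.2.1)
  exact ⟨hα₁, hα₂, hβ₁, hβ₂⟩

theorem stmt_4
    {Ω : Type*} [mΩ : MeasurableSpace Ω] (P : Measure Ω) [IsProbabilityMeasure P]
    (F : MeasureTheory.Filtration ℕ mΩ) (hF0 : F 0 = ⊥)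
    (ξ η : ℕ → Ω → ℝ)
    (hξm : ∀ n, 1 ≤ n → Measurable[F n] (ξ n))
    (hηm : ∀ n, 1 ≤ n → Measurable[F n] (η n))
    (hξv : ∀ n ω, ξ n ω = 1 ∨ ξ n ω = -1)
    (hηv : ∀ n ω, η n ω = 1 ∨ η n ω = -1)
    (hhalf : ∀ n, 1 ≤ n →
      (P[({ω | ξ n ω = 1}).indicator (fun _ => (1 : ℝ)) | F (n - 1)] =ᵐ[P] fun _ => 1 / 2) ∧
      (P[({ω | ξ n ω = -1}).indicator (fun _ => (1 : ℝ)) | F (n - 1)] =ᵐ[P] fun _ => 1 / 2) ∧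
      (P[({ω | η n ω = 1}).indicator (fun _ => (1 : ℝ)) | F (n - 1)] =ᵐ[P] fun _ => 1 / 2) ∧
      (P[({ω | η n ω = -1}).indicator (fun _ => (1 : ℝ)) | F (n - 1)] =ᵐ[P] fun _ => 1 / 2)) :
    ∀ n : ℕ, 1 ≤ n →
      (P {ω | alphaProc ξ η n ω ≠ ⊤ ∧ ξ (alphaProc ξ η n ω).toNat ω = 1}
        = 2⁻¹ * P {ω | alphaProc ξ η n ω ≠ ⊤}) ∧
      (P {ω | alphaProc ξ η n ω ≠ ⊤ ∧ ξ (alphaProc ξ η n ω).toNat ω = -1}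
        = 2⁻¹ * P {ω | alphaProc ξ η n ω ≠ ⊤}) ∧
      (P {ω | betaProc ξ η n ω ≠ ⊤ ∧ ξ (betaProc ξ η n ω).toNat ω = 1}
        = 2⁻¹ * P {ω | betaProc ξ η n ω ≠ ⊤}) ∧
      (P {ω | betaProc ξ η n ω ≠ ⊤ ∧ ξ (betaProc ξ η n ω).toNat ω = -1}
        = 2⁻¹ * P {ω | betaProc ξ η n ω ≠ ⊤}) :=
  stmt_4_general (mΩ := mΩ) P F ξ η hξm hηm hξv hηv hhalf
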